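/- Let F(t) = c₁ + ∫_{t₀}^t e^{−γ(τ)} b₂(τ) dτ with γ' = b₁. The functions q(t) = −(1/z)·ln(1 − z e^{γ(t)} F(t)) and p(t) = (e^{−γ(t)} − z F(t))·(c₂ + ∫_{t₀}^t (e^{−γ(τ)} − z F(τ))^{−1} dτ) solve the deformed oscillator system q' = b₁(t)·(e^{zq}−1)/z + b₂(t)·e^{zq}, p' = 1 − b₁(t)·e^{zq}·p − z·b₂(t)·e^{zq}·p, on intervals where 1 − z e^{γ(t)} F(t) > 0. -/

import Mathlib

/-!
With `G = 1 - z e^γ F` one has `e^{z q} = G⁻¹`, and `e^{-γ} - z F = e^{-γ} G`. Since `F' = e^{-γ} b₂`,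
`G' = -z (b₁ e^γ F + b₂)`, so `q' = -G' / (z G)` is the right-hand side of the `q`-equation. The function
`p` is `H J` with `H = e^{-γ} - z F`, `H' = -(b₁ + z b₂) e^{-γ}` and `J' = H⁻¹`, whence
`p' = 1 - (b₁ + z b₂) e^{-γ} J = 1 - (b₁ + z b₂) e^{z q} p`.
-/

open Real

lemma exp_mul_neg_log_div {z x : ℝ} (hz : z ≠ 0) (hx : 0 < x) :
    exp (z * (-log x / z)) = x⁻¹ := by
  rw [mul_div_cancel₀ _ hz, exp_neg, exp_log hx]

lemma exp_neg_sub_mul_eq_exp_neg_mul (a z x : ℝ) :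
    exp (-a) - z * x = exp (-a) * (1 - z * exp a * x) := by
  rw [exp_neg]
  field_simp

lemma Convex.hasDerivAt_integral_inv {H : ℝ → ℝ} (hH : Continuous H) {I : Set ℝ}
    (hI : Convex ℝ I) (hne : ∀ s ∈ I, H s ≠ 0) {a t : ℝ} (ha : a ∈ I) (ht : t ∈ I) :
    HasDerivAt (fun u => ∫ τ in a..u, (H τ)⁻¹) (H t)⁻¹ t := by
  have hsub : Set.uIcc a t ⊆ I := hI.ordConnected.uIcc_subset ha ht
  refine intervalIntegral.integral_hasDerivAt_right ?_
    hH.measurable.inv.stronglyMeasurable.stronglyMeasurableAtFilter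
    (hH.continuousAt.inv₀ (hne t ht))
  exact (hH.continuousOn.inv₀ fun s hs => hne s (hsub hs)).intervalIntegrable

section DeformedOscillator

variable {z t : ℝ} {b₁ b₂ γ F : ℝ → ℝ}

lemma hasDerivAt_neg_log_one_sub_div (hγ : HasDerivAt γ (b₁ t) t)
    (hF : HasDerivAt F (exp (-γ t) * b₂ t) t) (hz : z ≠ 0)
    (hpos : 0 < 1 - z * exp (γ t) * F t) :
    HasDerivAt (fun s => -log (1 - z * exp (γ s) * F s) / z)
      (b₁ t * ((1 - z * exp (γ t) * F t)⁻¹ - 1) / z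
        + b₂ t * (1 - z * exp (γ t) * F t)⁻¹) t := by
  have hG : HasDerivAt (fun s => 1 - z * exp (γ s) * F s)
      (-(z * (exp (γ t) * b₁ t) * F t + z * exp (γ t) * (exp (-γ t) * b₂ t))) t :=
    ((hγ.exp.const_mul z).mul hF).const_sub 1
  refine ((hG.log hpos.ne').neg.div_const z).congr_deriv ?_
  rw [exp_neg]
  field_simp
  ring

lemma hasDerivAt_exp_neg_sub_mul_mul {J : ℝ → ℝ} (hγ : HasDerivAt γ (b₁ t) t)
    (hF : HasDerivAt F (exp (-γ t) * b₂ t) t) (hne : 1 - z * exp (γ t) * F t ≠ 0)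
    (hJ : HasDerivAt J (exp (-γ t) - z * F t)⁻¹ t) :
    HasDerivAt (fun s => (exp (-γ s) - z * F s) * J s)
      (1 - b₁ t * (1 - z * exp (γ t) * F t)⁻¹ * ((exp (-γ t) - z * F t) * J t)
        - z * b₂ t * (1 - z * exp (γ t) * F t)⁻¹ * ((exp (-γ t) - z * F t) * J t)) t := by
  have hH : HasDerivAt (fun s => exp (-γ s) - z * F s)
      (exp (-γ t) * (-b₁ t) - z * (exp (-γ t) * b₂ t)) t :=
    hγ.neg.exp.sub (hF.const_mul z)
  refine (hH.mul hJ).congr_deriv ?_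
  rw [exp_neg_sub_mul_eq_exp_neg_mul]
  field_simp
  ring

end DeformedOscillator

theorem deformed_oscillator_system_solution_general (z : ℝ) (hz : z ≠ 0) (c₁ c₂ : ℝ)
    (b₁ b₂ γ : ℝ → ℝ) (hb₂ : Continuous b₂)
    (hγ : ∀ t, HasDerivAt γ (b₁ t) t)
    (I : Set ℝ) (hconv : Convex ℝ I) (t₀ : ℝ) (ht₀ : t₀ ∈ I)
    (F : ℝ → ℝ) (hF : ∀ t, F t = c₁ + ∫ τ in t₀..t, Real.exp (-γ τ) * b₂ τ)
    (hpos : ∀ t ∈ I, 0 < 1 - z * Real.exp (γ t) * F t)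
    (q p : ℝ → ℝ)
    (hq : ∀ t, q t = -Real.log (1 - z * Real.exp (γ t) * F t) / z)
    (hp : ∀ t, p t = (Real.exp (-γ t) - z * F t) *
        (c₂ + ∫ τ in t₀..t, (Real.exp (-γ τ) - z * F τ)⁻¹)) :
    ∀ t ∈ I,
      HasDerivAt q (b₁ t * (Real.exp (z * q t) - 1) / z + b₂ t * Real.exp (z * q t)) t ∧
      HasDerivAt p (1 - b₁ t * Real.exp (z * q t) * p t
        - z * b₂ t * Real.exp (z * q t) * p t) t := by
  have hγc : Continuous γ := continuous_iff_continuousAt.mpr fun s => (hγ s).continuousAt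
  have hFd : ∀ s, HasDerivAt F (exp (-γ s) * b₂ s) s := fun s => by
    obtain rfl : F = _ := funext hF
    exact ((hγc.neg.rexp.mul hb₂).integral_hasStrictDerivAt t₀ s).hasDerivAt.const_add c₁
  have hHc : Continuous fun s => exp (-γ s) - z * F s :=
    hγc.neg.rexp.sub (continuous_const.mul (continuous_iff_continuousAt.mpr
      fun s => (hFd s).continuousAt))
  have hHne : ∀ s ∈ I, exp (-γ s) - z * F s ≠ 0 := fun s hs => by
    rw [exp_neg_sub_mul_eq_exp_neg_mul]
    exact (mul_pos (exp_pos _) (hpos s hs)).ne'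
  intro t ht
  have hexp : exp (z * q t) = (1 - z * exp (γ t) * F t)⁻¹ := by
    rw [hq t]
    exact exp_mul_neg_log_div hz (hpos t ht)
  rw [hexp]
  obtain rfl : q = _ := funext hq
  obtain rfl : p = _ := funext hp
  exact ⟨hasDerivAt_neg_log_one_sub_div (hγ t) (hFd t) hz (hpos t ht),
    hasDerivAt_exp_neg_sub_mul_mul (hγ t) (hFd t) (hpos t ht).ne'
      ((hconv.hasDerivAt_integral_inv hHc hHne ht₀ ht).const_add c₂)⟩

theorem deformed_oscillator_system_solution (z : ℝ) (hz : z ≠ 0) (c₁ c₂ : ℝ)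
    (b₁ b₂ γ : ℝ → ℝ) (hb₁ : Continuous b₁) (hb₂ : Continuous b₂)
    (hγ : ∀ t, HasDerivAt γ (b₁ t) t)
    (I : Set ℝ) (hI : IsOpen I) (hconv : Convex ℝ I) (t₀ : ℝ) (ht₀ : t₀ ∈ I)
    (F : ℝ → ℝ) (hF : ∀ t, F t = c₁ + ∫ τ in t₀..t, Real.exp (-γ τ) * b₂ τ)
    (hpos : ∀ t ∈ I, 0 < 1 - z * Real.exp (γ t) * F t)
    (q p : ℝ → ℝ)
    (hq : ∀ t, q t = -Real.log (1 - z * Real.exp (γ t) * F t) / z)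
    (hp : ∀ t, p t = (Real.exp (-γ t) - z * F t) *
        (c₂ + ∫ τ in t₀..t, (Real.exp (-γ τ) - z * F τ)⁻¹)) :
    ∀ t ∈ I,
      HasDerivAt q (b₁ t * (Real.exp (z * q t) - 1) / z + b₂ t * Real.exp (z * q t)) t ∧
      HasDerivAt p (1 - b₁ t * Real.exp (z * q t) * p t
        - z * b₂ t * Real.exp (z * q t) * p t) t :=
  deformed_oscillator_system_solution_general z hz c₁ c₂ b₁ b₂ γ hb₂ hγ I hconv t₀ ht₀ F hF hpos q p
    hq hp
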